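/- Let p(z) be a complex polynomial of degree n with k pairwise distinct zeros z_1,...,z_k in the closed unit disc (1 ≤ k ≤ n). Then there exists a complex polynomial t(z) of degree exactly n-k+1 such that t is apolar to p^{(k-1)} (i.e. A_{n-k+1}(p^{(k-1)}, t) = 0) and every zero of t lies in the open disc |z| < 2(n-k+1)/ln 2. -/

import Mathlib

open Polynomial

/-- The apolarity form `A_N(u,v) = Σ_{j=0}^N (-1)^j u_j v_{N-j} / C(N,j)`. -/
noncomputable def apolarSum (N : ℕ) (u v : Polynomial ℂ) : ℂ :=
  ∑ j ∈ Finset.range (N + 1),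
    (-1) ^ j * u.coeff j * v.coeff (N - j) / (N.choose j : ℂ)

/-!
Let `s` be the set of the `k` given zeros. The divided difference of `p` on `s` vanishes.
Expanding `p` in monomials, the divided difference of `X ^ m` on `s` is `0` for `m < k - 1`
and `1` for `m = k - 1`, and on the unit disc it is bounded by `C(m, k - 1)`, being the complete
homogeneous symmetric polynomial of degree `m - k + 1` in `k` variables. Multiplying by
`(k - 1)!` this gives `|q₀| ≤ ∑_{r ≥ 1} |q_r|` for `q = p^{(k-1)}`, of degree `N = n - k + 1`.

If every zero of `q` had modulus at least `R`, then `q (R X)` would have all its zeros outside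
the unit disc, so its Mahler measure would be `|q₀|`, and the coefficient bound by the Mahler
measure gives `|q_r| R^r ≤ C(N, r) |q₀|`. Summing, `∑_{r ≥ 1} |q_r| ≤ ((1 + 1/R)^N - 1) |q₀|`,
which is `< |q₀|` for `R = 2N / ln 2` since `(1 + 1/R)^N ≤ e^{N/R} = √2`. Hence `q` has a zero
`a` with `|a| < R`, and `t = (X - a)^N` works because `A_N(q, (X - a)^N) = q(a)`.
-/

open Finset

section PowerDividedDiff

variable {F : Type*} [Field F] [DecidableEq F]

def powerDividedDiff (s : Finset F) (m : ℕ) : F :=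
  ∑ x ∈ s, x ^ m / ∏ y ∈ s.erase x, (x - y)

theorem powerDividedDiff_empty (m : ℕ) : powerDividedDiff (∅ : Finset F) m = 0 := by
  simp [powerDividedDiff]

theorem powerDividedDiff_of_lt {s : Finset F} {m : ℕ} (hm : m < #s) :
    powerDividedDiff s m = if m = #s - 1 then 1 else 0 := by
  have h := Lagrange.coeff_eq_sum (v := id) (Set.injOn_id _) (P := (X ^ m : F[X]))
    (by rw [degree_X_pow]; exact_mod_cast hm)
  simpa [powerDividedDiff, coeff_X_pow, eq_comm] using h.symm

theorem powerDividedDiff_succ {s : Finset F} {a : F} (ha : a ∈ s) (m : ℕ) :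
    powerDividedDiff s (m + 1) = a * powerDividedDiff s m + powerDividedDiff (s.erase a) m := by
  have hsplit : powerDividedDiff s (m + 1) =
      a * powerDividedDiff s m + ∑ x ∈ s, x ^ m * (x - a) / ∏ y ∈ s.erase x, (x - y) := by
    rw [powerDividedDiff, powerDividedDiff, mul_sum, ← sum_add_distrib]
    refine sum_congr rfl fun x _ => ?_
    rw [mul_div_assoc', ← add_div]
    ring
  rw [hsplit, ← add_sum_erase _ _ ha, sub_self, mul_zero, zero_div, zero_add, powerDividedDiff]
  congr 1
  refine sum_congr rfl fun x hx => ?_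
  obtain ⟨hxa, -⟩ := mem_erase.mp hx
  rw [← mul_prod_erase _ _ (mem_erase.mpr ⟨Ne.symm hxa, ha⟩), erase_right_comm,
    mul_comm (x ^ m), mul_div_mul_left _ _ (sub_ne_zero.mpr hxa)]

theorem sum_coeff_mul_powerDividedDiff (p : F[X]) (s : Finset F) :
    ∑ m ∈ range (p.natDegree + 1), p.coeff m * powerDividedDiff s m =
      ∑ x ∈ s, p.eval x / ∏ y ∈ s.erase x, (x - y) := by
  simp_rw [powerDividedDiff, mul_sum, eval_eq_sum_range, sum_div]
  rw [sum_comm]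
  simp_rw [mul_div_assoc]

theorem coeff_pred_card_eq_neg_sum {p : F[X]} {s : Finset F} (hs : s.Nonempty)
    (hroot : ∀ x ∈ s, p.IsRoot x) :
    p.coeff (#s - 1) = -∑ m ∈ Ico #s (p.natDegree + 1), p.coeff m * powerDividedDiff s m := by
  rcases eq_or_ne p 0 with rfl | hp
  · simp
  have hcard : #s ≤ p.natDegree := card_le_degree_of_subset_roots fun x hx =>
    (mem_roots hp).mpr (hroot x hx)
  have hlow : ∑ m ∈ range #s, p.coeff m * powerDividedDiff s m = p.coeff (#s - 1) := by
    rw [sum_eq_single_of_mem (#s - 1) (mem_range.mpr (Nat.sub_lt hs.card_pos one_pos)),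
      powerDividedDiff_of_lt (Nat.sub_lt hs.card_pos one_pos), if_pos rfl, mul_one]
    intro m hm hne
    rw [powerDividedDiff_of_lt (mem_range.mp hm), if_neg hne, mul_zero]
  have hzero : ∑ m ∈ range (p.natDegree + 1), p.coeff m * powerDividedDiff s m = 0 := by
    rw [sum_coeff_mul_powerDividedDiff]
    exact sum_eq_zero fun x hx => by rw [(hroot x hx).eq_zero, zero_div]
  rw [← sum_range_add_sum_Ico _ (by omega : #s ≤ p.natDegree + 1), hlow] at hzero
  exact eq_neg_of_add_eq_zero_left hzero

end PowerDividedDiff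

section NormedField

variable {K : Type*} [NormedField K] [DecidableEq K]

theorem norm_powerDividedDiff_le_of_lt {s : Finset K} {m : ℕ} (hm : m < #s) :
    ‖powerDividedDiff s m‖ ≤ m.choose (#s - 1) := by
  rw [powerDividedDiff_of_lt hm]
  split_ifs with h
  · simp [h]
  · simp

theorem norm_powerDividedDiff_le {s : Finset K} (hdisc : ∀ x ∈ s, ‖x‖ ≤ 1) (m : ℕ) :
    ‖powerDividedDiff s m‖ ≤ m.choose (#s - 1) := by
  induction m generalizing s with
  | zero =>
    rcases s.eq_empty_or_nonempty with rfl | hne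
    · simp [powerDividedDiff_empty]
    · exact norm_powerDividedDiff_le_of_lt hne.card_pos
  | succ m ih =>
    rcases lt_or_ge (m + 1) #s with hm | -
    · exact norm_powerDividedDiff_le_of_lt hm
    rcases s.eq_empty_or_nonempty with rfl | ⟨a, ha⟩
    · simp [powerDividedDiff_empty]
    have hrest : ‖powerDividedDiff (s.erase a) m‖ + m.choose (#s - 1) ≤
        (m + 1).choose (#s - 1) := by
      rcases (s.erase a).eq_empty_or_nonempty with he | hne
      · rw [he, powerDividedDiff_empty, norm_zero, zero_add]
        exact_mod_cast Nat.choose_le_choose _ m.le_succ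
      · have hcard : #s - 1 = (#s - 2) + 1 := by
          have := hne.card_pos; rw [card_erase_of_mem ha] at this; omega
        have h := ih (s := s.erase a) fun x hx => hdisc x (mem_of_mem_erase hx)
        rw [card_erase_of_mem ha, Nat.sub_sub] at h
        rw [hcard, Nat.choose_succ_succ', Nat.cast_add]
        gcongr
    calc ‖powerDividedDiff s (m + 1)‖
        ≤ ‖a‖ * ‖powerDividedDiff s m‖ + ‖powerDividedDiff (s.erase a) m‖ := by
          rw [powerDividedDiff_succ ha, ← norm_mul]; exact norm_add_le _ _
      _ ≤ 1 * m.choose (#s - 1) + ‖powerDividedDiff (s.erase a) m‖ := by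
          gcongr
          exacts [hdisc a ha, ih hdisc]
      _ ≤ (m + 1).choose (#s - 1) := by linarith

theorem norm_coeff_pred_card_le {p : K[X]} {s : Finset K} (hs : s.Nonempty)
    (hroot : ∀ x ∈ s, p.IsRoot x) (hdisc : ∀ x ∈ s, ‖x‖ ≤ 1) :
    ‖p.coeff (#s - 1)‖ ≤ ∑ m ∈ Ico #s (p.natDegree + 1), ‖p.coeff m‖ * m.choose (#s - 1) := by
  rw [coeff_pred_card_eq_neg_sum hs hroot, norm_neg]
  refine (norm_sum_le _ _).trans (sum_le_sum fun m _ => ?_)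
  rw [norm_mul]
  gcongr
  exact norm_powerDividedDiff_le hdisc m

end NormedField

theorem natDegree_iterate_derivative_eq {R : Type*} [Semiring R] [IsAddTorsionFree R]
    (p : R[X]) (j : ℕ) : (derivative^[j] p).natDegree = p.natDegree - j := by
  induction j with
  | zero => rfl
  | succ j ih => rw [Function.iterate_succ_apply', natDegree_derivative, ih, Nat.sub_sub]

theorem norm_coeff_zero_iterate_derivative_le {𝕜 : Type*} [RCLike 𝕜] [DecidableEq 𝕜] {p : 𝕜[X]}
    {s : Finset 𝕜} (hs : s.Nonempty) (hroot : ∀ x ∈ s, p.IsRoot x) (hdisc : ∀ x ∈ s, ‖x‖ ≤ 1) :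
    ‖(derivative^[#s - 1] p).coeff 0‖ ≤
      ∑ r ∈ Ico 1 ((derivative^[#s - 1] p).natDegree + 1),
        ‖(derivative^[#s - 1] p).coeff r‖ := by
  set j := #s - 1
  have hnorm (r : ℕ) : ‖(derivative^[j] p).coeff r‖ =
      (r + j).descFactorial j * ‖p.coeff (r + j)‖ := by
    rw [coeff_iterate_derivative, nsmul_eq_mul, norm_mul, RCLike.norm_natCast]
  have hsj : #s = j + 1 := by have := hs.card_pos; omega
  calc ‖(derivative^[j] p).coeff 0‖ = j.factorial * ‖p.coeff j‖ := by
        rw [hnorm, zero_add, Nat.descFactorial_self]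
    _ ≤ j.factorial * ∑ m ∈ Ico (j + 1) (p.natDegree + 1), ‖p.coeff m‖ * m.choose j := by
        rw [← hsj]; gcongr; exact norm_coeff_pred_card_le hs hroot hdisc
    _ = ∑ m ∈ Ico (j + 1) (p.natDegree + 1), m.descFactorial j * ‖p.coeff m‖ := by
        rw [mul_sum]
        refine sum_congr rfl fun m _ => ?_
        rw [Nat.descFactorial_eq_factorial_mul_choose, Nat.cast_mul]
        ring
    _ = _ := by
        rw [natDegree_iterate_derivative_eq, sum_Ico_eq_sum_range, sum_Ico_eq_sum_range]
        refine sum_congr (by congr 1; omega) fun r _ => ?_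
        rw [hnorm]
        congr 3 <;> omega

theorem mahlerMeasure_eq_norm_coeff_zero {p : ℂ[X]} (h : ∀ a, p.IsRoot a → 1 ≤ ‖a‖) :
    p.mahlerMeasure = ‖p.coeff 0‖ := by
  rcases eq_or_ne p 0 with rfl | hp
  · simp
  rw [mahlerMeasure_eq_leadingCoeff_mul_prod_roots,
    (IsAlgClosed.splits p).coeff_zero_eq_leadingCoeff_mul_prod_roots, norm_mul, norm_mul,
    norm_pow, norm_neg, norm_one, one_pow, one_mul,
    show ‖p.roots.prod‖ = (p.roots.map (‖·‖)).prod from map_multiset_prod (normHom : ℂ →*₀ ℝ) _]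
  congr 2
  exact Multiset.map_congr rfl fun a ha => max_eq_right (h a ((mem_roots hp).mp ha))

theorem norm_coeff_mul_pow_le {p : ℂ[X]} {R : ℝ} (hR : 0 < R)
    (h : ∀ a, p.IsRoot a → R ≤ ‖a‖) (r : ℕ) :
    ‖p.coeff r‖ * R ^ r ≤ p.natDegree.choose r * ‖p.coeff 0‖ := by
  set g := p.comp (C (R : ℂ) * X)
  have hg : ∀ a, g.IsRoot a → 1 ≤ ‖a‖ := fun a ha => by
    have := h _ (by simpa [g, IsRoot, eval_comp] using ha)
    rw [norm_mul, Complex.norm_real, Real.norm_of_nonneg hR.le] at this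
    exact le_of_mul_le_mul_left (by linarith) hR
  have hdeg : g.natDegree = p.natDegree := by
    rw [natDegree_comp, natDegree_C_mul_X _ (by exact_mod_cast hR.ne'), mul_one]
  have := norm_coeff_le_choose_mul_mahlerMeasure r g
  rwa [mahlerMeasure_eq_norm_coeff_zero hg, hdeg, comp_C_mul_X_coeff, comp_C_mul_X_coeff,
    pow_zero, mul_one, norm_mul, norm_pow, Complex.norm_real, Real.norm_of_nonneg hR.le] at this

theorem exists_isRoot_norm_lt {p : ℂ[X]} {R : ℝ} (hR : 0 < R)
    (hpow : (1 + R⁻¹) ^ p.natDegree < 2)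
    (hcoeff : ‖p.coeff 0‖ ≤ ∑ r ∈ Ico 1 (p.natDegree + 1), ‖p.coeff r‖) :
    ∃ a, p.IsRoot a ∧ ‖a‖ < R := by
  by_contra! hfar
  have h0 : 0 < ‖p.coeff 0‖ := by
    refine norm_pos_iff.mpr fun h0 => ?_
    have := hfar 0 (by rw [IsRoot, ← coeff_zero_eq_eval_zero, h0])
    rw [norm_zero] at this
    linarith
  have hbound : ∑ r ∈ range (p.natDegree + 1), ‖p.coeff r‖ ≤
      (1 + R⁻¹) ^ p.natDegree * ‖p.coeff 0‖ := by
    rw [add_comm (1 : ℝ), add_pow, sum_mul]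
    refine sum_le_sum fun r _ => ?_
    rw [one_pow, mul_one, inv_pow, mul_comm _ (p.natDegree.choose r : ℝ), mul_assoc,
      ← div_eq_inv_mul, ← mul_div_assoc, le_div_iff₀ (by positivity)]
    exact norm_coeff_mul_pow_le hR hfar r
  rw [sum_range_eq_add_Ico _ (Nat.succ_pos _)] at hbound
  linarith [mul_lt_mul_of_pos_right hpow h0]

theorem one_add_inv_pow_lt_two (N : ℕ) : (1 + (2 * N / Real.log 2)⁻¹) ^ N < 2 := by
  rcases N.eq_zero_or_pos with rfl | hN
  · norm_num
  have hlog : 0 < Real.log 2 := Real.log_pos one_lt_two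
  calc (1 + (2 * N / Real.log 2)⁻¹) ^ N ≤ Real.exp ((2 * N / Real.log 2)⁻¹) ^ N := by
        gcongr
        linarith [Real.add_one_le_exp (2 * N / Real.log 2)⁻¹]
    _ = Real.exp (Real.log 2 / 2) := by
        rw [← Real.exp_nat_mul]
        congr 1
        field_simp
    _ < Real.exp (Real.log 2) := Real.exp_lt_exp.mpr (by linarith)
    _ = 2 := Real.exp_log two_pos

theorem apolarSum_X_sub_C_pow {u : ℂ[X]} {N : ℕ} (hu : u.natDegree ≤ N) (a : ℂ) :
    apolarSum N u ((X - C a) ^ N) = u.eval a := by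
  rw [apolarSum, eval_eq_sum_range' (Nat.lt_succ_of_le hu)]
  refine sum_congr rfl fun j hj => ?_
  have hjN : j ≤ N := Nat.lt_succ_iff.mp (mem_range.mp hj)
  have hchoose : (N.choose j : ℂ) ≠ 0 := Nat.cast_ne_zero.mpr (Nat.choose_pos hjN).ne'
  rw [sub_eq_add_neg, ← C_neg, coeff_X_add_C_pow, Nat.sub_sub_self hjN, Nat.choose_symm hjN]
  calc (-1) ^ j * u.coeff j * ((-a) ^ j * N.choose j) / N.choose j
      = u.coeff j * ((-1) ^ j * (-a) ^ j) := by field_simp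
    _ = u.coeff j * a ^ j := by rw [← mul_pow, neg_one_mul, neg_neg]

/-- If `p` has degree `n` with `k` pairwise distinct zeros in the closed unit disc
(`1 ≤ k ≤ n`), then there exists a polynomial `t` of degree exactly `n-k+1` apolar
to `p^{(k-1)}` whose zeros all lie in the open disc `|z| < 2(n-k+1)/ln 2`. -/
theorem exists_apolar_t (n k : ℕ) (hk : 1 ≤ k) (hkn : k ≤ n)
    (p : Polynomial ℂ) (hp : p.natDegree = n)
    (z : Fin k → ℂ) (hinj : Function.Injective z)
    (hz : ∀ i, ‖z i‖ ≤ 1) (hroot : ∀ i, p.IsRoot (z i)) :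
    ∃ t : Polynomial ℂ, t.natDegree = n - k + 1 ∧
      apolarSum (n - k + 1) (derivative^[k - 1] p) t = 0 ∧
      ∀ w : ℂ, t.IsRoot w →
        ‖w‖ < 2 * ((n : ℝ) - k + 1) / Real.log 2 := by
  classical
  set s := univ.image z
  have hs : #s = k := by rw [card_image_of_injective _ hinj, card_univ, Fintype.card_fin]
  have hdeg : (derivative^[k - 1] p).natDegree = n - k + 1 := by
    rw [natDegree_iterate_derivative_eq, hp]; omega
  have hcoeff := norm_coeff_zero_iterate_derivative_le (p := p) (s := s)
    (by rw [← card_pos, hs]; omega) (by simpa [s] using hroot) (by simpa [s] using hz)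
  rw [hs] at hcoeff
  have hN : (n : ℝ) - k + 1 = (n - k + 1 : ℕ) := by push_cast [Nat.cast_sub hkn]; ring
  obtain ⟨a, ha, haR⟩ := exists_isRoot_norm_lt (R := 2 * ((n : ℝ) - k + 1) / Real.log 2)
    (by rw [hN]; positivity) (by rw [hdeg, hN]; exact one_add_inv_pow_lt_two _) hcoeff
  refine ⟨(X - C a) ^ (n - k + 1), by simp, ?_, fun w hw => ?_⟩
  · rw [apolarSum_X_sub_C_pow hdeg.le, ha.eq_zero]
  · obtain rfl : w = a := by simpa [IsRoot, sub_eq_zero] using hw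
    exact haR
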